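/- Let N ≥ 4 be an even integer, ℓ ∈ {1, …, N/2 − 1}, q_x ∈ ℝ, q_y ∈ ℝ with q_y ≠ 0, and set χ = 2 cos(2ℓπ/N). Define the 2×2 real matrices L_xx = −4q_x·I₂, L_yy = −2q_y·I₂, L_xy = q_x·[[2(χ+1), 2], [−2, 2]], L_yx = q_y·[[1, −1], [1, χ+1]]. Then L_xx − L_xy · L_yy^{−1} · L_yx = −4 sin²(ℓπ/N) · q_x · I₂. -/
import Mathlib


/-- Schur-complement identity for the blocks of the generator of the
metastable jump process in the invariant subspace of the two-dimensional irreducible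
representation `π_{ℓ,±}`, yielding the factor `4 sin²(ℓπ/N)`. -/
theorem stmt_18 (N : ℕ) (hN : 4 ≤ N) (hNe : Even N) (ℓ : ℕ) (hℓ1 : 1 ≤ ℓ)
    (hℓ2 : ℓ ≤ N / 2 - 1) (qx qy : ℝ) (hqy : qy ≠ 0) :
    let χ : ℝ := 2 * Real.cos (2 * (ℓ : ℝ) * Real.pi / (N : ℝ));
    let Lxx : Matrix (Fin 2) (Fin 2) ℝ := (-(4 * qx)) • (1 : Matrix (Fin 2) (Fin 2) ℝ);
    let Lyy : Matrix (Fin 2) (Fin 2) ℝ := (-(2 * qy)) • (1 : Matrix (Fin 2) (Fin 2) ℝ);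
    let Lxy : Matrix (Fin 2) (Fin 2) ℝ := qx • !![2 * (χ + 1), 2; -2, 2];
    let Lyx : Matrix (Fin 2) (Fin 2) ℝ := qy • !![1, -1; 1, χ + 1];
    Lxx - Lxy * Lyy⁻¹ * Lyx
      = (-(4 * Real.sin ((ℓ : ℝ) * Real.pi / (N : ℝ)) ^ 2 * qx))
          • (1 : Matrix (Fin 2) (Fin 2) ℝ) := by
  intro χ Lxx Lyy Lxy Lyx
  have hinv : Lyy⁻¹ = (-(2 * qy))⁻¹ • (1 : Matrix (Fin 2) (Fin 2) ℝ) := by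
    apply Matrix.inv_eq_right_inv
    show ((-(2 * qy)) • (1 : Matrix (Fin 2) (Fin 2) ℝ)) * _ = 1
    rw [Matrix.smul_mul, Matrix.mul_smul, Matrix.one_mul, smul_smul,
      mul_inv_cancel₀ (by simpa using hqy), one_smul]
  have hchi : χ = 2 - 4 * Real.sin ((ℓ : ℝ) * Real.pi / (N : ℝ)) ^ 2 := by
    have h2 : 2 * (ℓ : ℝ) * Real.pi / (N : ℝ) = 2 * ((ℓ : ℝ) * Real.pi / (N : ℝ)) := by
      ring
    show 2 * Real.cos (2 * (ℓ : ℝ) * Real.pi / (N : ℝ)) = _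
    rw [h2, Real.cos_two_mul]
    nlinarith [Real.sin_sq_add_cos_sq ((ℓ : ℝ) * Real.pi / (N : ℝ))]
  rw [hinv]
  show ((-(4 * qx)) • (1 : Matrix (Fin 2) (Fin 2) ℝ)) -
      (qx • !![2 * (χ + 1), 2; -2, 2]) * ((-(2 * qy))⁻¹ • (1 : Matrix (Fin 2) (Fin 2) ℝ)) *
      (qy • !![1, -1; 1, χ + 1]) = _
  ext i j
  fin_cases i <;> fin_cases j <;>
    simp [Matrix.mul_apply, Fin.sum_univ_succ, Matrix.one_apply, hchi] <;>
    field_simp <;> ring
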